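/- Let o ∈ 𝒫^m_{ℓ+1} and let (r_n)_{n≥1} be any sequence of elements of ℛ. Define O_0 = O^ℓ_0 = O^1_0 = o, and for n ≥ 1 set O_n = Φ_O(O_{n−1}, r_n), O^ℓ_n = Φ_O^ℓ(O^ℓ_{n−1}, r_n) and O^1_n = Φ_O^1(O^1_{n−1}, r_n). Then for every n ≥ 0, O^ℓ_n ⪯ O_n ⪯ O^1_n. -/

import Mathlib

open Finset

noncomputable section

/-- The mutation map `ℳ_H`. -/
def calMH (ℓ κ : ℕ) (p : ℝ) (b : ℕ) (u : Fin ℓ → ℝ) : ℕ :=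
  b - (Finset.univ.filter (fun k : Fin ℓ => (k : ℕ) < b ∧ u k < p / (κ : ℝ))).card
    + (Finset.univ.filter
        (fun k : Fin ℓ => b ≤ (k : ℕ) ∧ 1 - p * (1 - 1 / (κ : ℝ)) < u k)).card

/-- The lumped fitness function `A_H`. -/
def AH (σ : ℝ) (b : ℕ) : ℝ := if b = 0 then σ else 1

/-- `o(k → l)`: move one chromosome from class `k` to class `l`. -/
def moveOcc (o : ℕ → ℕ) (k l : ℕ) : ℕ → ℕ :=
  Function.update (Function.update o k (o k - 1)) l
    (Function.update o k (o k - 1) l + 1)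

/-- `o` is an occupancy distribution of `m` chromosomes in classes `0,…,ℓ`. -/
def isOcc (ℓ m : ℕ) (o : ℕ → ℕ) : Prop :=
  (∀ h, ℓ < h → o h = 0) ∧ (∑ h ∈ Finset.range (ℓ + 1), o h) = m

/-- The partial order `⪯` on occupancy distributions. -/
def occLE (o o' : ℕ → ℕ) : Prop :=
  ∀ l, (∑ h ∈ Finset.range (l + 1), o h) ≤ ∑ h ∈ Finset.range (l + 1), o' h

/-- The coupling map `Φ_O`, given the selection map `SO` and the index map `K`. -/
def PhiO (ℓ κ : ℕ) (p : ℝ) (SO : (ℕ → ℕ) → ℝ → ℕ) (K : (ℕ → ℕ) → ℕ → ℕ)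
    (o : ℕ → ℕ) (s : ℝ) (j : ℕ) (u : Fin ℓ → ℝ) : ℕ → ℕ :=
  moveOcc o (K o j) (calMH ℓ κ p (SO o s) u)

/-- The projection `π_ℓ(o) = (o(0),0,…,0,m−o(0))`. -/
def piL (ℓ m : ℕ) (o : ℕ → ℕ) : ℕ → ℕ :=
  fun h => if h = 0 then o 0 else if h = ℓ then m - o 0 else 0

/-- The projection `π_1(o) = (o(0),m−o(0),0,…,0)`. -/
def pi1 (m : ℕ) (o : ℕ → ℕ) : ℕ → ℕ :=
  fun h => if h = 0 then o 0 else if h = 1 then m - o 0 else 0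

/-- The lower coupling map `Φ_O^ℓ`. -/
def PhiOL (ℓ m κ : ℕ) (p : ℝ) (SO : (ℕ → ℕ) → ℝ → ℕ) (K : (ℕ → ℕ) → ℕ → ℕ)
    (o : ℕ → ℕ) (s : ℝ) (j : ℕ) (u : Fin ℓ → ℝ) : ℕ → ℕ :=
  if o 0 = 0 then
    (if PhiO ℓ κ p SO K o s j u 0 = 0 then PhiO ℓ κ p SO K o s j u
     else piL ℓ m (PhiO ℓ κ p SO K o s j u))
  else piL ℓ m (PhiO ℓ κ p SO K (piL ℓ m o) s j u)

/-- The upper coupling map `Φ_O^1`. -/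
def PhiOU (ℓ m κ : ℕ) (p : ℝ) (SO : (ℕ → ℕ) → ℝ → ℕ) (K : (ℕ → ℕ) → ℕ → ℕ)
    (o : ℕ → ℕ) (s : ℝ) (j : ℕ) (u : Fin ℓ → ℝ) : ℕ → ℕ :=
  if o 0 = 0 then
    (if PhiO ℓ κ p SO K o s j u 0 = 0 then PhiO ℓ κ p SO K o s j u
     else pi1 m (PhiO ℓ κ p SO K o s j u))
  else pi1 m (PhiO ℓ κ p SO K (pi1 m o) s j u)

/-! The coupling map `Φ_O` is monotone for `⪯`. If `o ⪯ o'`, then `o'` puts a larger share of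
its fitness on every initial segment of classes, so the roulette wheel `𝒮_O` stops at a lower
class for `o'`; mutation `ℳ_H` is monotone in the parent class, because `p < 1` keeps a site
from mutating both down and up; and the `j`-th chromosome also lies in a lower class of `o'`.
Since `π_ℓ(o) ⪯ o ⪯ π_1(o)`, the lower (upper) map sends anything dominated by (dominating)
`o` to something dominated by (dominating) `Φ_O(o, r)`, and induction on `n` concludes. -/

theorem card_filter_lt_sub_add_card_filter_le_monotone {ℓ : ℕ} (A B : Fin ℓ → Prop)
    [DecidablePred A] [DecidablePred B] (hAB : ∀ k, A k → ¬ B k) :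
    Monotone fun b => b - #{k : Fin ℓ | (k : ℕ) < b ∧ A k} + #{k : Fin ℓ | b ≤ (k : ℕ) ∧ B k} := by
  refine monotone_nat_of_le_succ fun b => ?_
  have hlt : ∀ c, #{k : Fin ℓ | (k : ℕ) < c ∧ A k} ≤ c := fun c =>
    calc #{k : Fin ℓ | (k : ℕ) < c ∧ A k} ≤ #{k : Fin ℓ | (k : ℕ) < c} :=
          card_le_card fun k => by simp only [mem_filter]; tauto
      _ = min ℓ c := Fin.card_filter_val_lt
      _ ≤ c := min_le_right _ _
  have hb : #{k : Fin ℓ | (k : ℕ) = b} ≤ 1 :=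
    card_le_one.2 fun k hk k' hk' => Fin.ext <| by simp_all
  have hstep : ∀ k : Fin ℓ,
      (if (k : ℕ) < b + 1 ∧ A k then 1 else 0) + (if b ≤ (k : ℕ) ∧ B k then 1 else 0)
        ≤ (if (k : ℕ) < b ∧ A k then 1 else 0) + (if b + 1 ≤ (k : ℕ) ∧ B k then 1 else 0)
          + (if (k : ℕ) = b then 1 else 0) := by
    intro k
    by_cases hA : A k <;> by_cases hB : B k
    · exact absurd hB (hAB k hA)
    all_goals simp only [hA, hB, and_true, and_false, if_false]; split_ifs <;> omega
  have hsum := sum_le_sum fun k (_ : k ∈ univ) => hstep k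
  simp only [sum_add_distrib, ← card_filter] at hsum
  have := hlt b
  have := hlt (b + 1)
  omega

theorem calMH_monotone {ℓ κ : ℕ} {p : ℝ} (hp : p < 1) (u : Fin ℓ → ℝ) :
    Monotone fun b => calMH ℓ κ p b u :=
  card_filter_lt_sub_add_card_filter_le_monotone _ _ fun k h1 h2 => by
    have : p * (1 - 1 / (κ : ℝ)) = p - p / κ := by ring
    linarith

theorem calMH_le {ℓ κ : ℕ} {p : ℝ} (hp : p < 1) (u : Fin ℓ → ℝ) {b : ℕ} (hb : b ≤ ℓ) :
    calMH ℓ κ p b u ≤ ℓ :=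
  calc calMH ℓ κ p b u ≤ calMH ℓ κ p ℓ u := calMH_monotone hp u hb
    _ ≤ ℓ := by
      have : #{k : Fin ℓ | ℓ ≤ (k : ℕ) ∧ 1 - p * (1 - 1 / (κ : ℝ)) < u k} = 0 := by
        simp [Fin.is_lt]
      simp only [calMH, this]
      omega

theorem sum_range_eq_of_eq_zero {M : Type*} [AddCommMonoid M] {w : ℕ → M} {ℓ n : ℕ}
    (hw : ∀ h, ℓ < h → w h = 0) (hn : ℓ + 1 ≤ n) :
    ∑ h ∈ range n, w h = ∑ h ∈ range (ℓ + 1), w h :=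
  (sum_subset (range_subset_range.2 hn) fun h _ hh => hw h (by simpa using hh)).symm

namespace isOcc

variable {ℓ m : ℕ} {o : ℕ → ℕ}

theorem sum_range_of_le (ho : isOcc ℓ m o) {n : ℕ} (hn : ℓ + 1 ≤ n) :
    ∑ h ∈ range n, o h = m :=
  (sum_range_eq_of_eq_zero ho.1 hn).trans ho.2

theorem sum_range_le (ho : isOcc ℓ m o) (n : ℕ) : ∑ h ∈ range n, o h ≤ m :=
  calc ∑ h ∈ range n, o h ≤ ∑ h ∈ range (max n (ℓ + 1)), o h :=
        sum_le_sum_of_subset (range_subset_range.2 (le_max_left _ _))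
    _ = m := ho.sum_range_of_le (le_max_right _ _)

theorem apply_zero_le (ho : isOcc ℓ m o) : o 0 ≤ m := by
  simpa using ho.sum_range_le 1

end isOcc

theorem occLE.refl (o : ℕ → ℕ) : occLE o o := fun _ => le_rfl

theorem occLE.trans {o o' o'' : ℕ → ℕ} (h : occLE o o') (h' : occLE o' o'') : occLE o o'' :=
  fun l => (h l).trans (h' l)

theorem occLE.sum_range_le {o o' : ℕ → ℕ} (hle : occLE o o') :
    ∀ n, ∑ h ∈ range n, o h ≤ ∑ h ∈ range n, o' h
  | 0 => by simp
  | l + 1 => hle l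

theorem sum_range_moveOcc {o : ℕ → ℕ} {k : ℕ} (l : ℕ) (hk : 0 < o k) (n : ℕ) :
    ∑ h ∈ range n, moveOcc o k l h + (if k < n then 1 else 0)
      = ∑ h ∈ range n, o h + (if l < n then 1 else 0) := by
  have hpoint : ∀ h, moveOcc o k l h + (if h = k then 1 else 0)
      = o h + (if h = l then 1 else 0) := by
    intro h
    simp only [moveOcc, Function.update_apply]
    split_ifs <;> subst_vars <;> omega
  have hind : ∀ a, (∑ h ∈ range n, if h = a then 1 else 0) = if a < n then 1 else 0 := by
    simp
  rw [← hind, ← hind, ← sum_add_distrib, ← sum_add_distrib]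
  exact sum_congr rfl fun h _ => hpoint h

theorem isOcc.moveOcc {ℓ m : ℕ} {o : ℕ → ℕ} (ho : isOcc ℓ m o) {k l : ℕ} (hk : 0 < o k)
    (hl : l ≤ ℓ) : isOcc ℓ m (moveOcc o k l) := by
  have hkℓ : k ≤ ℓ := by
    by_contra! hlt
    exact hk.ne' (ho.1 k hlt)
  refine ⟨fun h hh => ?_, ?_⟩
  · simp only [_root_.moveOcc, Function.update_apply, if_neg (show h ≠ l by omega),
      if_neg (show h ≠ k by omega)]
    exact ho.1 h hh
  · have := sum_range_moveOcc l hk (ℓ + 1)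
    simp only [show k < ℓ + 1 by omega, show l < ℓ + 1 by omega, if_true, ho.2] at this
    omega

-- `k` is the class of the `j`-th chromosome when chromosomes are listed class by class
def IsClassOf (o : ℕ → ℕ) (j k : ℕ) : Prop :=
  ∑ h ∈ range k, o h < j ∧ j ≤ ∑ h ∈ range (k + 1), o h

theorem IsClassOf.pos {o : ℕ → ℕ} {j k : ℕ} (hk : IsClassOf o j k) : 0 < o k := by
  have := hk.2
  rw [sum_range_succ] at this
  have := hk.1
  omega

theorem occLE_moveOcc {o o' : ℕ → ℕ} (hle : occLE o o') {j k k' l l' : ℕ}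
    (hk : IsClassOf o j k) (hk' : IsClassOf o' j k') (hl : l' ≤ l) :
    occLE (moveOcc o k l) (moveOcc o' k' l') := by
  intro n
  have hmove := sum_range_moveOcc l hk.pos (n + 1)
  have hmove' := sum_range_moveOcc l' hk'.pos (n + 1)
  have hsum := hle n
  -- the only delicate case: the `j`-th unit lies below level `n` in `o'` but not in `o`
  have hgap : k' < n + 1 → n + 1 ≤ k →
      ∑ h ∈ range (n + 1), o h + 1 ≤ ∑ h ∈ range (n + 1), o' h := fun h1 h2 =>
    calc ∑ h ∈ range (n + 1), o h + 1 ≤ ∑ h ∈ range k, o h + 1 := by gcongr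
      _ ≤ j := hk.1
      _ ≤ ∑ h ∈ range (k' + 1), o' h := hk'.2
      _ ≤ ∑ h ∈ range (n + 1), o' h := sum_le_sum_of_subset (range_subset_range.2 h1)
  split_ifs at hmove hmove' <;> omega

def fitness (σ : ℝ) (o : ℕ → ℕ) (n : ℕ) : ℝ := ∑ h ∈ range n, (o h : ℝ) * AH σ h

theorem fitness_eq_add_sum (σ : ℝ) (o : ℕ → ℕ) {n : ℕ} (hn : 0 < n) :
    fitness σ o n = (σ - 1) * o 0 + ∑ h ∈ range n, (o h : ℝ) := by
  have hpoint : ∀ h, (o h : ℝ) * AH σ h = (if h = 0 then (σ - 1) * o 0 else 0) + o h := by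
    intro h
    unfold AH
    split_ifs with h0
    · subst h0; ring
    · ring
  simp only [fitness, hpoint, sum_add_distrib, sum_ite_eq', mem_range, hn, if_true]

theorem fitness_monotone {σ : ℝ} (hσ : 1 ≤ σ) (o : ℕ → ℕ) : Monotone (fitness σ o) :=
  fun _ _ hab => sum_le_sum_of_subset_of_nonneg (range_subset_range.2 hab) fun h _ _ =>
    mul_nonneg (Nat.cast_nonneg _) (by unfold AH; split_ifs <;> linarith)

namespace isOcc

variable {ℓ m : ℕ} {o : ℕ → ℕ}

theorem fitness_of_le (σ : ℝ) (ho : isOcc ℓ m o) {n : ℕ} (hn : ℓ + 1 ≤ n) :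
    fitness σ o n = fitness σ o (ℓ + 1) :=
  sum_range_eq_of_eq_zero (fun h hh => by simp [ho.1 h hh]) hn

theorem fitness_total (σ : ℝ) (ho : isOcc ℓ m o) :
    fitness σ o (ℓ + 1) = (σ - 1) * o 0 + m := by
  rw [fitness_eq_add_sum σ o (Nat.succ_pos ℓ), ← Nat.cast_sum, ho.2]

end isOcc

-- cross-multiplied form of `fitness σ o n / T_o ≤ fitness σ o' n / T_o'`, `T` the total fitness
theorem fitness_mul_le_mul_fitness {ℓ m : ℕ} {σ : ℝ} (hσ : 1 ≤ σ) {o o' : ℕ → ℕ}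
    (ho : isOcc ℓ m o) (ho' : isOcc ℓ m o') (hle : occLE o o') {n : ℕ} (hn : 0 < n) :
    fitness σ o n * fitness σ o' (ℓ + 1) ≤ fitness σ o' n * fitness σ o (ℓ + 1) := by
  rw [fitness_eq_add_sum σ o hn, fitness_eq_add_sum σ o' hn, ho.fitness_total, ho'.fitness_total,
    ← Nat.cast_sum, ← Nat.cast_sum]
  have h0 : (o 0 : ℝ) ≤ o' 0 := by exact_mod_cast (by simpa using hle 0 : o 0 ≤ o' 0)
  have hS : ((∑ h ∈ range n, o h : ℕ) : ℝ) ≤ ∑ h ∈ range n, o' h := by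
    exact_mod_cast hle.sum_range_le n
  have hSm : ((∑ h ∈ range n, o' h : ℕ) : ℝ) ≤ m := by exact_mod_cast ho'.sum_range_le n
  have hcross : (o 0 : ℝ) * (m - ∑ h ∈ range n, o' h)
      ≤ o' 0 * (m - ((∑ h ∈ range n, o h : ℕ) : ℝ)) :=
    mul_le_mul h0 (by linarith) (by linarith) (Nat.cast_nonneg _)
  linear_combination (σ - 1) * hcross + (m : ℝ) * hS

-- `l = 𝒮_O(o, s)`: the roulette wheel weighted by `A_H` stops in class `l`
def IsSelectionIndex (σ : ℝ) (ℓ : ℕ) (o : ℕ → ℕ) (s : ℝ) (l : ℕ) : Prop :=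
  fitness σ o l ≤ s * fitness σ o (ℓ + 1) ∧ s * fitness σ o (ℓ + 1) < fitness σ o (l + 1)

namespace IsSelectionIndex

variable {ℓ m : ℕ} {σ s : ℝ} {o o' : ℕ → ℕ} {l l' : ℕ}

theorem le (ho : isOcc ℓ m o) (hl : IsSelectionIndex σ ℓ o s l) : l ≤ ℓ := by
  by_contra! hlt
  obtain ⟨h1, h2⟩ := hl
  rw [ho.fitness_of_le σ hlt] at h1
  rw [ho.fitness_of_le σ (n := l + 1) (by omega)] at h2
  linarith

theorem le_of_occLE (hσ : 1 ≤ σ) (hm : 1 ≤ m) (ho : isOcc ℓ m o) (ho' : isOcc ℓ m o')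
    (hle : occLE o o') (hl : IsSelectionIndex σ ℓ o s l) (hl' : IsSelectionIndex σ ℓ o' s l') :
    l' ≤ l := by
  by_contra! hlt
  have hT : 0 ≤ fitness σ o (ℓ + 1) := by
    rw [ho.fitness_total]
    exact add_nonneg (mul_nonneg (by linarith) (Nat.cast_nonneg _)) (Nat.cast_nonneg _)
  have hT' : 0 < fitness σ o' (ℓ + 1) := by
    rw [ho'.fitness_total]
    exact add_pos_of_nonneg_of_pos (mul_nonneg (by linarith) (Nat.cast_nonneg _))
      (by exact_mod_cast hm)
  have h' : fitness σ o' (l + 1) ≤ s * fitness σ o' (ℓ + 1) :=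
    (fitness_monotone hσ o' hlt).trans hl'.1
  have hcross := fitness_mul_le_mul_fitness hσ ho ho' hle (Nat.succ_pos l)
  nlinarith [mul_lt_mul_of_pos_right hl.2 hT', mul_le_mul_of_nonneg_right h' hT]

end IsSelectionIndex

theorem sum_range_ite_zero_ite (a b : ℕ) {i : ℕ} (hi : i ≠ 0) (n : ℕ) :
    ∑ h ∈ range n, (if h = 0 then a else if h = i then b else 0)
      = (if 0 < n then a else 0) + (if i < n then b else 0) := by
  have hpoint : ∀ h, (if h = 0 then a else if h = i then b else 0)
      = (if h = 0 then a else 0) + (if h = i then b else 0) := by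
    intro h
    split_ifs <;> omega
  simp only [hpoint, sum_add_distrib, sum_ite_eq', mem_range]

namespace isOcc

variable {ℓ m : ℕ} {o : ℕ → ℕ}

theorem piL (hℓ : 1 ≤ ℓ) (ho : isOcc ℓ m o) : isOcc ℓ m (piL ℓ m o) := by
  refine ⟨fun h hh => by simp only [_root_.piL]; split_ifs <;> omega, ?_⟩
  simp only [_root_.piL]
  rw [sum_range_ite_zero_ite _ _ (by omega)]
  have := ho.apply_zero_le
  simp only [Nat.succ_pos, Nat.lt_succ_self, if_true]
  omega

theorem pi1 (hℓ : 1 ≤ ℓ) (ho : isOcc ℓ m o) : isOcc ℓ m (pi1 m o) := by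
  refine ⟨fun h hh => by simp only [_root_.pi1]; split_ifs <;> omega, ?_⟩
  simp only [_root_.pi1]
  rw [sum_range_ite_zero_ite _ _ one_ne_zero]
  have := ho.apply_zero_le
  simp only [Nat.succ_pos, show 1 < ℓ + 1 by omega, if_true]
  omega

theorem piL_occLE (hℓ : 1 ≤ ℓ) (ho : isOcc ℓ m o) : occLE (_root_.piL ℓ m o) o := by
  intro l
  simp only [_root_.piL]
  rw [sum_range_ite_zero_ite _ _ (by omega), if_pos l.succ_pos]
  split_ifs with hl
  · rw [ho.sum_range_of_le hl]
    have := ho.apply_zero_le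
    omega
  · simpa using single_le_sum (fun h _ => Nat.zero_le (o h)) (mem_range.2 l.succ_pos)

theorem occLE_pi1 (ho : isOcc ℓ m o) : occLE o (_root_.pi1 m o) := by
  intro l
  simp only [_root_.pi1]
  rw [sum_range_ite_zero_ite _ _ one_ne_zero, if_pos l.succ_pos]
  split_ifs with hl
  · have := ho.sum_range_le (l + 1)
    have := ho.apply_zero_le
    omega
  · simp [show l = 0 by omega]

end isOcc

section Coupling

variable {ℓ m κ : ℕ} {p σ s : ℝ} {SO : (ℕ → ℕ) → ℝ → ℕ} {K : (ℕ → ℕ) → ℕ → ℕ}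
  {o : ℕ → ℕ} {j : ℕ} {u : Fin ℓ → ℝ}

theorem isOcc.PhiO (hp : p < 1) (ho : isOcc ℓ m o) (hSO : IsSelectionIndex σ ℓ o s (SO o s))
    (hK : IsClassOf o j (K o j)) : isOcc ℓ m (PhiO ℓ κ p SO K o s j u) :=
  ho.moveOcc hK.pos (calMH_le hp u (hSO.le ho))

theorem PhiO_occLE_PhiO (hp : p < 1) (hσ : 1 ≤ σ) (hm : 1 ≤ m)
    (hSO : ∀ x, isOcc ℓ m x → IsSelectionIndex σ ℓ x s (SO x s))
    (hK : ∀ x, isOcc ℓ m x → IsClassOf x j (K x j))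
    {o' : ℕ → ℕ} (ho : isOcc ℓ m o) (ho' : isOcc ℓ m o') (hle : occLE o o') :
    occLE (PhiO ℓ κ p SO K o s j u) (PhiO ℓ κ p SO K o' s j u) :=
  occLE_moveOcc hle (hK o ho) (hK o' ho') <|
    calMH_monotone hp u <| (hSO o ho).le_of_occLE hσ hm ho ho' hle (hSO o' ho')

theorem PhiOL_isOcc_and_occLE_PhiO (hℓ : 1 ≤ ℓ) (hp : p < 1) (hσ : 1 ≤ σ) (hm : 1 ≤ m)
    (hSO : ∀ x, isOcc ℓ m x → IsSelectionIndex σ ℓ x s (SO x s))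
    (hK : ∀ x, isOcc ℓ m x → IsClassOf x j (K x j))
    {oL : ℕ → ℕ} (hoL : isOcc ℓ m oL) (ho : isOcc ℓ m o) (hle : occLE oL o) :
    isOcc ℓ m (PhiOL ℓ m κ p SO K oL s j u) ∧
      occLE (PhiOL ℓ m κ p SO K oL s j u) (PhiO ℓ κ p SO K o s j u) := by
  have hstep : ∀ x, isOcc ℓ m x → occLE x o → isOcc ℓ m (PhiO ℓ κ p SO K x s j u) ∧
      occLE (PhiO ℓ κ p SO K x s j u) (PhiO ℓ κ p SO K o s j u) := fun x hx hxo =>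
    ⟨hx.PhiO hp (hSO x hx) (hK x hx), PhiO_occLE_PhiO hp hσ hm hSO hK hx ho hxo⟩
  have hproj : ∀ x, isOcc ℓ m x → occLE x o →
      isOcc ℓ m (piL ℓ m (PhiO ℓ κ p SO K x s j u)) ∧
        occLE (piL ℓ m (PhiO ℓ κ p SO K x s j u)) (PhiO ℓ κ p SO K o s j u) := fun x hx hxo =>
    have ⟨hocc, hle'⟩ := hstep x hx hxo
    ⟨hocc.piL hℓ, (hocc.piL_occLE hℓ).trans hle'⟩
  unfold PhiOL
  split_ifs
  · exact hstep oL hoL hle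
  · exact hproj oL hoL hle
  · exact hproj _ (hoL.piL hℓ) ((hoL.piL_occLE hℓ).trans hle)

theorem PhiOU_isOcc_and_PhiO_occLE (hℓ : 1 ≤ ℓ) (hp : p < 1) (hσ : 1 ≤ σ) (hm : 1 ≤ m)
    (hSO : ∀ x, isOcc ℓ m x → IsSelectionIndex σ ℓ x s (SO x s))
    (hK : ∀ x, isOcc ℓ m x → IsClassOf x j (K x j))
    {oU : ℕ → ℕ} (ho : isOcc ℓ m o) (hoU : isOcc ℓ m oU) (hle : occLE o oU) :
    isOcc ℓ m (PhiOU ℓ m κ p SO K oU s j u) ∧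
      occLE (PhiO ℓ κ p SO K o s j u) (PhiOU ℓ m κ p SO K oU s j u) := by
  have hstep : ∀ x, isOcc ℓ m x → occLE o x → isOcc ℓ m (PhiO ℓ κ p SO K x s j u) ∧
      occLE (PhiO ℓ κ p SO K o s j u) (PhiO ℓ κ p SO K x s j u) := fun x hx hox =>
    ⟨hx.PhiO hp (hSO x hx) (hK x hx), PhiO_occLE_PhiO hp hσ hm hSO hK ho hx hox⟩
  have hproj : ∀ x, isOcc ℓ m x → occLE o x →
      isOcc ℓ m (pi1 m (PhiO ℓ κ p SO K x s j u)) ∧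
        occLE (PhiO ℓ κ p SO K o s j u) (pi1 m (PhiO ℓ κ p SO K x s j u)) := fun x hx hox =>
    have ⟨hocc, hle'⟩ := hstep x hx hox
    ⟨hocc.pi1 hℓ, hle'.trans hocc.occLE_pi1⟩
  unfold PhiOU
  split_ifs
  · exact hstep oU hoU hle
  · exact hproj oU hoU hle
  · exact hproj _ (hoU.pi1 hℓ) (hle.trans hoU.occLE_pi1)

end Coupling

theorem lower_upper_processes_bound_general
    (ℓ m κ : ℕ) (hℓ : 1 ≤ ℓ) (hm : 1 ≤ m)
    (p : ℝ) (hp : 0 < p ∧ p < 1) (σ : ℝ) (hσ : 1 ≤ σ)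
    (SO : (ℕ → ℕ) → ℝ → ℕ)
    (hSO : ∀ (o : ℕ → ℕ) (s : ℝ), isOcc ℓ m o → 0 ≤ s → s < 1 →
      (∑ h ∈ Finset.range (SO o s), (o h : ℝ) * AH σ h)
          ≤ s * ∑ h ∈ Finset.range (ℓ + 1), (o h : ℝ) * AH σ h ∧
        s * (∑ h ∈ Finset.range (ℓ + 1), (o h : ℝ) * AH σ h)
          < ∑ h ∈ Finset.range (SO o s + 1), (o h : ℝ) * AH σ h)
    (K : (ℕ → ℕ) → ℕ → ℕ)
    (hK : ∀ (o : ℕ → ℕ) (j : ℕ), isOcc ℓ m o → 1 ≤ j → j ≤ m →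
      (∑ h ∈ Finset.range (K o j), o h) < j ∧
        j ≤ ∑ h ∈ Finset.range (K o j + 1), o h)
    -- the random inputs `r_n = (s_n, i_n, j_n, u_n)`
    (s : ℕ → ℝ) (j : ℕ → ℕ) (u : ℕ → Fin ℓ → ℝ)
    (hs : ∀ n, 0 ≤ s n ∧ s n < 1) (hj : ∀ n, 1 ≤ j n ∧ j n ≤ m)
    -- the starting occupancy distribution
    (o : ℕ → ℕ) (ho : isOcc ℓ m o)
    -- the occupancy process and the lower and upper processes
    (O OL OU : ℕ → ℕ → ℕ)
    (hO0 : O 0 = o) (hOL0 : OL 0 = o) (hOU0 : OU 0 = o)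
    (hO : ∀ n, O (n + 1) = PhiO ℓ κ p SO K (O n) (s (n + 1)) (j (n + 1)) (u (n + 1)))
    (hOL : ∀ n, OL (n + 1)
      = PhiOL ℓ m κ p SO K (OL n) (s (n + 1)) (j (n + 1)) (u (n + 1)))
    (hOU : ∀ n, OU (n + 1)
      = PhiOU ℓ m κ p SO K (OU n) (s (n + 1)) (j (n + 1)) (u (n + 1))) :
    ∀ n, occLE (OL n) (O n) ∧ occLE (O n) (OU n) := by
  have hinv : ∀ n, isOcc ℓ m (OL n) ∧ isOcc ℓ m (O n) ∧ isOcc ℓ m (OU n) ∧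
      occLE (OL n) (O n) ∧ occLE (O n) (OU n) := by
    intro n
    induction n with
    | zero => rw [hO0, hOL0, hOU0]; exact ⟨ho, ho, ho, occLE.refl o, occLE.refl o⟩
    | succ n ih =>
      obtain ⟨hL, hM, hU, hLM, hMU⟩ := ih
      have hSOn : ∀ x, isOcc ℓ m x → IsSelectionIndex σ ℓ x (s (n + 1)) (SO x (s (n + 1))) :=
        fun x hx => hSO x _ hx (hs _).1 (hs _).2
      have hKn : ∀ x, isOcc ℓ m x → IsClassOf x (j (n + 1)) (K x (j (n + 1))) :=
        fun x hx => hK x _ hx (hj _).1 (hj _).2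
      obtain ⟨hL', hLM'⟩ := PhiOL_isOcc_and_occLE_PhiO (κ := κ) (u := u (n + 1))
        hℓ hp.2 hσ hm hSOn hKn hL hM hLM
      obtain ⟨hU', hMU'⟩ := PhiOU_isOcc_and_PhiO_occLE (κ := κ) (u := u (n + 1))
        hℓ hp.2 hσ hm hSOn hKn hM hU hMU
      rw [hOL, hO, hOU]
      exact ⟨hL', hM.PhiO hp.2 (hSOn _ hM) (hKn _ hM), hU', hLM', hMU'⟩
  exact fun n => ⟨(hinv n).2.2.2.1, (hinv n).2.2.2.2⟩

theorem lower_upper_processes_bound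
    (ℓ m κ : ℕ) (hℓ : 1 ≤ ℓ) (hm : 1 ≤ m) (hκ : 2 ≤ κ)
    (p : ℝ) (hp : 0 < p ∧ p < 1) (σ : ℝ) (hσ : 1 ≤ σ)
    (SO : (ℕ → ℕ) → ℝ → ℕ)
    (hSO : ∀ (o : ℕ → ℕ) (s : ℝ), isOcc ℓ m o → 0 ≤ s → s < 1 →
      (∑ h ∈ Finset.range (SO o s), (o h : ℝ) * AH σ h)
          ≤ s * ∑ h ∈ Finset.range (ℓ + 1), (o h : ℝ) * AH σ h ∧
        s * (∑ h ∈ Finset.range (ℓ + 1), (o h : ℝ) * AH σ h)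
          < ∑ h ∈ Finset.range (SO o s + 1), (o h : ℝ) * AH σ h)
    (K : (ℕ → ℕ) → ℕ → ℕ)
    (hK : ∀ (o : ℕ → ℕ) (j : ℕ), isOcc ℓ m o → 1 ≤ j → j ≤ m →
      (∑ h ∈ Finset.range (K o j), o h) < j ∧
        j ≤ ∑ h ∈ Finset.range (K o j + 1), o h)
    -- the random inputs `r_n = (s_n, i_n, j_n, u_n)`
    (s : ℕ → ℝ) (i j : ℕ → ℕ) (u : ℕ → Fin ℓ → ℝ)
    (hs : ∀ n, 0 ≤ s n ∧ s n < 1) (hj : ∀ n, 1 ≤ j n ∧ j n ≤ m)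
    (hu : ∀ n k, 0 ≤ u n k ∧ u n k ≤ 1)
    -- the starting occupancy distribution
    (o : ℕ → ℕ) (ho : isOcc ℓ m o)
    -- the occupancy process and the lower and upper processes
    (O OL OU : ℕ → ℕ → ℕ)
    (hO0 : O 0 = o) (hOL0 : OL 0 = o) (hOU0 : OU 0 = o)
    (hO : ∀ n, O (n + 1) = PhiO ℓ κ p SO K (O n) (s (n + 1)) (j (n + 1)) (u (n + 1)))
    (hOL : ∀ n, OL (n + 1)
      = PhiOL ℓ m κ p SO K (OL n) (s (n + 1)) (j (n + 1)) (u (n + 1)))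
    (hOU : ∀ n, OU (n + 1)
      = PhiOU ℓ m κ p SO K (OU n) (s (n + 1)) (j (n + 1)) (u (n + 1))) :
    ∀ n, occLE (OL n) (O n) ∧ occLE (O n) (OU n) :=
  lower_upper_processes_bound_general ℓ m κ hℓ hm p hp σ hσ SO hSO K hK s j u hs hj o ho O OL OU hO0
    hOL0 hOU0 hO hOL hOU
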